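/- Let Π be a normal logic program with cycles(Π) = {C₁, …, Cₙ}, let U := {λ(C₁), …, λ(Cₙ)} be the set of all unsupported constraints of Π, and let L be a consistent set of literals over Π. Then the inclusion–exclusion identity |SP((Π|L) ∪ U)| = Σ_{i=0}^{n} (−1)^i Σ_{Γ ∈ Λ_i(Π)} |SP(Π|(L ∪ B(Γ)))| holds; in other words, |SP((Π|L) ∪ U)| equals the incremental count a_n^L. -/

import Mathlib

open scoped Classical

/-- A normal logic program rule: head is an atom (`some a`) or ⊥ (`none`),
with positive body `pos` and negative body `neg`. -/
structure ASPRule (V : Type*) where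
  head : Option V
  pos : Finset V
  neg : Finset V

/-- A normal logic program is a finite set of rules. -/
abbrev ASPProgram (V : Type*) := Finset (ASPRule V)

variable {V : Type*}

/-- Atoms occurring in a rule. -/
noncomputable def ruleAtoms (r : ASPRule V) : Finset V :=
  r.head.toFinset ∪ r.pos ∪ r.neg

/-- `at(Π)`: atoms occurring in a program. -/
noncomputable def progAtoms (P : ASPProgram V) : Finset V := P.sup ruleAtoms

/-- The body of rule `r` is satisfied by interpretation `I`:
`B⁺(r) ⊆ I` and `B⁻(r) ∩ I = ∅`. -/
def bodySat (I : Finset V) (r : ASPRule V) : Prop :=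
  r.pos ⊆ I ∧ ∀ a ∈ r.neg, a ∉ I

/-- `I` satisfies rule `r`: whenever the body is satisfied, the head is an
atom belonging to `I` (so a constraint, with head ⊥, is satisfied iff its body is not). -/
def ruleSat (I : Finset V) (r : ASPRule V) : Prop :=
  bodySat I r → ∃ a, r.head = some a ∧ a ∈ I

/-- `I` satisfies every rule of `P`. -/
def satisfiesAll (P : ASPProgram V) (I : Finset V) : Prop := ∀ r ∈ P, ruleSat I r

/-- `I` is a model of `P` (interpretations are subsets of `at(P)`). -/
def isModel (P : ASPProgram V) (I : Finset V) : Prop :=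
  I ⊆ progAtoms P ∧ satisfiesAll P I

/-- `I` is a supported model of `P`: a model in which every atom of `I` has a
supporting rule; equivalently a model of Clark's completion `compl(P)`. -/
def isSupported (P : ASPProgram V) (I : Finset V) : Prop :=
  isModel P I ∧ ∀ a ∈ I, ∃ r ∈ P, r.head = some a ∧ bodySat I r

/-- `SP(P)`: the set of supported models of `P`,
i.e. the models of Clark's completion `compl(P)`. -/
def SP (P : ASPProgram V) : Set (Finset V) := {I | isSupported P I}

/-- The GL-reduct `P^I`. -/
noncomputable def reduct (P : ASPProgram V) (I : Finset V) : ASPProgram V :=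
  (P.filter (fun r => ∀ a ∈ r.neg, a ∉ I)).image
    (fun r => (⟨r.head, r.pos, ∅⟩ : ASPRule V))

/-- `I` is an answer set of `P`: a ⊆-minimal model of the GL-reduct `P^I`. -/
def isAnswerSet (P : ASPProgram V) (I : Finset V) : Prop :=
  I ⊆ progAtoms P ∧ satisfiesAll (reduct P I) I ∧
    ∀ J ⊆ I, satisfiesAll (reduct P I) J → J = I

/-- `AS(P)`: the set of answer sets of `P`. -/
def AS (P : ASPProgram V) : Set (Finset V) := {I | isAnswerSet P I}

/-- A literal: an atom or a negated atom. -/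
inductive ASPLit (V : Type*) where
  | pos (a : V)
  | neg (a : V)

/-- The atom of a literal. -/
def litAtom : ASPLit V → V
  | .pos a => a
  | .neg a => a

/-- Satisfaction of a literal by an interpretation. -/
def litSat (I : Finset V) : ASPLit V → Prop
  | .pos a => a ∈ I
  | .neg a => a ∉ I

/-- `ic(ℓ)`: the constraint whose body is the complementary literal of `ℓ`:
`ic(a) = (⊥ ← ¬ a)` and `ic(¬ a) = (⊥ ← a)`. -/
def ic : ASPLit V → ASPRule V
  | .pos a => ⟨none, ∅, {a}⟩
  | .neg a => ⟨none, {a}, ∅⟩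

/-- `Π|L := Π ∪ {ic(ℓ) : ℓ ∈ L}`. -/
noncomputable def assumeP (P : ASPProgram V) (L : Finset (ASPLit V)) : ASPProgram V :=
  P ∪ L.image ic

/-- `L` is a set of literals over `P`. -/
def litsOver (P : ASPProgram V) (L : Finset (ASPLit V)) : Prop :=
  ∀ ℓ ∈ L, litAtom ℓ ∈ progAtoms P

/-- `L` is consistent: it contains no atom together with its negation. -/
def consistentLits (L : Finset (ASPLit V)) : Prop :=
  ∀ a : V, ¬ (ASPLit.pos a ∈ L ∧ ASPLit.neg a ∈ L)

/-- Edge of the positive dependency digraph `DP(P)`. -/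
def dpEdge (P : ASPProgram V) (a b : V) : Prop :=
  ∃ r ∈ P, a ∈ r.pos ∧ r.head = some b

/-- `C` is the vertex set of a directed cycle of `DP(P)`, i.e. of a nonempty
directed walk whose first and last vertices coincide. -/
def isCycleSet (P : ASPProgram V) (C : Finset V) : Prop :=
  ∃ (v : V) (l : List V),
    List.Chain (dpEdge P) v (l ++ [v]) ∧ (v :: l).toFinset = C

/-- `cycles(P)`: the finite collection of vertex sets of directed cycles of `DP(P)`. -/
noncomputable def cyclesF (P : ASPProgram V) : Finset (Finset V) :=
  (progAtoms P).powerset.filter (isCycleSet P)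

/-- `ES(C)`: the external supports of `C`. -/
noncomputable def extSupport (P : ASPProgram V) (C : Finset V) : Finset V :=
  (progAtoms P).filter (fun a =>
    ∃ r ∈ P, a ∈ r.pos ∧ (∃ h, r.head = some h ∧ h ∈ C) ∧ r.pos ∩ C = ∅)

/-- The unsupported constraint `λ(C) := (⊥, C, ES(C))`. -/
noncomputable def unsupC (P : ASPProgram V) (C : Finset V) : ASPRule V :=
  ⟨none, C, extSupport P C⟩

/-- `Λ_d(P)`: the collection of sets `{λ(C) : C ∈ 𝒞}` for `𝒞 ⊆ cycles(P)` with `|𝒞| = d`. -/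
noncomputable def Lam (P : ASPProgram V) (d : ℕ) : Finset (Finset (ASPRule V)) :=
  ((cyclesF P).powersetCard d).image (fun S => S.image (unsupC P))

/-- `B(Γ)`: the body literals of a set `Γ` of unsupported constraints, read as assumptions. -/
noncomputable def bodyLits (Γ : Finset (ASPRule V)) : Finset (ASPLit V) :=
  Γ.sup (fun r => r.pos.image ASPLit.pos ∪ r.neg.image ASPLit.neg)

/-- The incremental count `a_d^L`. -/
noncomputable def incCount (P : ASPProgram V) (L : Finset (ASPLit V)) (d : ℕ) : ℤ :=
  ∑ i ∈ Finset.range (d + 1), (-1 : ℤ) ^ i *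
    ∑ Γ ∈ Lam P i, ((SP (assumeP P (L ∪ bodyLits Γ))).ncard : ℤ)

/-! A constraint supports no atom, so adding constraints to a program only filters its supported
models. The constraints `ic(ℓ)`, `ℓ ∈ B(Γ)`, hold exactly when the body of every `λ(C) ∈ Γ` holds,
i.e. when the interpretation violates every constraint of `Γ`. The identity is therefore
inclusion–exclusion, inside `SP(Π|L)`, for the events "`λ(C)` is violated", `C ∈ cycles(Π)`;
distinct cycles give distinct constraints, so the sets `Γ ∈ Λ_i(Π)` are indexed by the
`i`-subsets of `cycles(Π)`. -/

open Finset

theorem Finset.card_filter_forall_not_eq_sum_powerset {ι α : Type*} (X : Finset α)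
    (A : Finset ι) (p : ι → α → Prop) [∀ i, DecidablePred (p i)] :
    (#{x ∈ X | ∀ i ∈ A, ¬ p i x} : ℤ) =
      ∑ t ∈ A.powerset, (-1 : ℤ) ^ #t * #{x ∈ X | ∀ i ∈ t, p i x} := by
  have card_univ_filter (q : α → Prop) [DecidablePred q] :
      #{x : X | q x} = #{x ∈ X | q x} := by
    rw [univ_eq_attach, filter_attach, card_map, card_attach]
  convert inclusion_exclusion_card_inf_compl A fun i ↦ ({x : X | p i x} : Finset X)
    using 1
  · rw [← card_univ_filter]
    congr 2
    ext x
    simp [mem_inf]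
  · refine sum_congr rfl fun t _ ↦ ?_
    rw [← card_univ_filter]
    congr 3
    ext x
    simp [mem_inf]

lemma ruleSat_iff_not_bodySat {I : Finset V} {r : ASPRule V} (h : r.head = none) :
    ruleSat I r ↔ ¬ bodySat I r := by
  simp [ruleSat, h]

lemma ruleSat_ic (I : Finset V) (ℓ : ASPLit V) : ruleSat I (ic ℓ) ↔ litSat I ℓ := by
  cases ℓ <;> simp [ic, ruleSat, bodySat, litSat]

lemma head_eq_none_of_mem_image_ic {L : Finset (ASPLit V)} {r : ASPRule V}
    (hr : r ∈ L.image ic) : r.head = none := by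
  obtain ⟨ℓ, -, rfl⟩ := mem_image.mp hr
  cases ℓ <;> rfl

lemma mem_progAtoms_of_head_eq {P : ASPProgram V} {r : ASPRule V} {a : V} (hr : r ∈ P)
    (ha : r.head = some a) : a ∈ progAtoms P :=
  mem_sup.mpr ⟨r, hr, by simp [ruleAtoms, ha]⟩

lemma isSupported_union_iff {Q R : ASPProgram V} (hR : ∀ r ∈ R, r.head = none)
    (I : Finset V) :
    isSupported (Q ∪ R) I ↔ isSupported Q I ∧ satisfiesAll R I := by
  have supported_iff : (∀ a ∈ I, ∃ r ∈ Q ∪ R, r.head = some a ∧ bodySat I r) ↔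
      ∀ a ∈ I, ∃ r ∈ Q, r.head = some a ∧ bodySat I r := by
    refine forall₂_congr fun a _ ↦ ⟨?_, fun ⟨r, hr, h⟩ ↦ ⟨r, mem_union_left R hr, h⟩⟩
    rintro ⟨r, hr, hhead, hbody⟩
    refine ⟨r, (mem_union.mp hr).resolve_right fun hrR ↦ ?_, hhead, hbody⟩
    simp [hR r hrR] at hhead
  simp only [isSupported, isModel, satisfiesAll, forall_mem_union, supported_iff]
  constructor
  · rintro ⟨⟨-, hQ, hR⟩, hsupp⟩
    refine ⟨⟨⟨fun a ha ↦ ?_, hQ⟩, hsupp⟩, hR⟩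
    obtain ⟨r, hr, hhead, -⟩ := hsupp a ha
    exact mem_progAtoms_of_head_eq hr hhead
  · rintro ⟨⟨⟨hsub, hQ⟩, hsupp⟩, hR⟩
    exact ⟨⟨hsub.trans (sup_mono subset_union_left), hQ, hR⟩, hsupp⟩

noncomputable def supportedModels (Q : ASPProgram V) : Finset (Finset V) :=
  {I ∈ (progAtoms Q).powerset | isSupported Q I}

lemma ncard_SP_union_eq_card_filter {Q R : ASPProgram V} (hR : ∀ r ∈ R, r.head = none) :
    (SP (Q ∪ R)).ncard = #{I ∈ supportedModels Q | satisfiesAll R I} := by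
  rw [← Set.ncard_coe_finset]
  congr
  ext I
  simp only [SP, supportedModels, Set.mem_ofPred_eq, mem_coe, mem_filter, mem_powerset,
    isSupported_union_iff hR]
  exact ⟨fun h ↦ ⟨⟨h.1.1.1, h.1⟩, h.2⟩, fun h ↦ ⟨h.1.2, h.2⟩⟩

lemma satisfiesAll_image_unsupC {P : ASPProgram V} {A : Finset (Finset V)} {I : Finset V} :
    satisfiesAll (A.image (unsupC P)) I ↔ ∀ C ∈ A, ¬ bodySat I (unsupC P C) := by
  simp only [satisfiesAll, forall_mem_image]
  exact forall₂_congr fun C _ ↦ ruleSat_iff_not_bodySat rfl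

lemma forall_litSat_bodyLits {Γ : Finset (ASPRule V)} {I : Finset V} :
    (∀ ℓ ∈ bodyLits Γ, litSat I ℓ) ↔ ∀ r ∈ Γ, bodySat I r := by
  simp only [bodyLits, mem_sup]
  constructor
  · intro h r hr
    exact ⟨fun a ha ↦ h (.pos a) ⟨r, hr, mem_union_left _ (mem_image_of_mem _ ha)⟩,
      fun a ha ↦ h (.neg a) ⟨r, hr, mem_union_right _ (mem_image_of_mem _ ha)⟩⟩
  · rintro h ℓ ⟨r, hr, hℓ⟩
    rcases mem_union.mp hℓ with hℓ | hℓ <;> obtain ⟨a, ha, rfl⟩ := mem_image.mp hℓ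
    exacts [(h r hr).1 ha, (h r hr).2 a ha]

lemma satisfiesAll_image_ic {L : Finset (ASPLit V)} {I : Finset V} :
    satisfiesAll (L.image ic) I ↔ ∀ ℓ ∈ L, litSat I ℓ := by
  simp only [satisfiesAll, forall_mem_image, ruleSat_ic]

lemma assumeP_union (P : ASPProgram V) (L L' : Finset (ASPLit V)) :
    assumeP P (L ∪ L') = assumeP P L ∪ L'.image ic := by
  simp only [assumeP, image_union, union_assoc]

lemma sum_Lam {M : Type*} [AddCommMonoid M] (P : ASPProgram V) (i : ℕ)
    (f : Finset (ASPRule V) → M) :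
    ∑ Γ ∈ Lam P i, f Γ = ∑ S ∈ (cyclesF P).powersetCard i, f (S.image (unsupC P)) :=
  sum_image fun _ _ _ _ h ↦ image_injective (fun _ _ h ↦ congrArg ASPRule.pos h) h

theorem inclusion_exclusion_supported_general (V : Type*) (P : ASPProgram V)
    (L : Finset (ASPLit V)) :
    ((SP (assumeP P L ∪ (cyclesF P).image (unsupC P))).ncard : ℤ) =
      ∑ i ∈ Finset.range ((cyclesF P).card + 1), (-1 : ℤ) ^ i *
        ∑ Γ ∈ Lam P i, ((SP (assumeP P (L ∪ bodyLits Γ))).ncard : ℤ) := by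
  set X := supportedModels (assumeP P L)
  have violating_card (S : Finset (Finset V)) :
      (SP (assumeP P (L ∪ bodyLits (S.image (unsupC P))))).ncard =
        #{I ∈ X | ∀ C ∈ S, bodySat I (unsupC P C)} := by
    rw [assumeP_union, ncard_SP_union_eq_card_filter fun _ ↦ head_eq_none_of_mem_image_ic]
    simp only [satisfiesAll_image_ic, forall_litSat_bodyLits, forall_mem_image]
    rfl
  rw [ncard_SP_union_eq_card_filter (forall_mem_image.mpr fun _ _ ↦ rfl)]
  calc ((#{I ∈ X | satisfiesAll ((cyclesF P).image (unsupC P)) I} : ℕ) : ℤ)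
      = #{I ∈ X | ∀ C ∈ cyclesF P, ¬ bodySat I (unsupC P C)} := by
        simp only [satisfiesAll_image_unsupC]
    _ = ∑ S ∈ (cyclesF P).powerset,
          (-1 : ℤ) ^ #S * #{I ∈ X | ∀ C ∈ S, bodySat I (unsupC P C)} :=
        card_filter_forall_not_eq_sum_powerset X _ _
    _ = _ := by
        rw [sum_powerset]
        refine sum_congr rfl fun i _ ↦ ?_
        rw [sum_Lam, mul_sum]
        refine sum_congr rfl fun S hS ↦ ?_
        rw [(mem_powersetCard.mp hS).2, violating_card]

/-- Inclusion–exclusion identity: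
`|SP((Π|L) ∪ U)| = Σ_{i=0}^{n} (−1)^i Σ_{Γ ∈ Λ_i(Π)} |SP(Π|(L ∪ B(Γ)))|`,
where `U` is the set of all unsupported constraints of `Π` and `n = |cycles(Π)|`;
in other words, `|SP((Π|L) ∪ U)|` equals the incremental count `a_n^L`. -/
theorem inclusion_exclusion_supported (V : Type*) (P : ASPProgram V)
    (L : Finset (ASPLit V)) (hover : litsOver P L) (hcons : consistentLits L) :
    ((SP (assumeP P L ∪ (cyclesF P).image (unsupC P))).ncard : ℤ) =
      ∑ i ∈ Finset.range ((cyclesF P).card + 1), (-1 : ℤ) ^ i *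
        ∑ Γ ∈ Lam P i, ((SP (assumeP P (L ∪ bodyLits Γ))).ncard : ℤ) :=
  inclusion_exclusion_supported_general V P L
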